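/- Let ⟨K,B,P,N⟩_R be a DPI, D a set of minimal diagnoses w.r.t. it, and Q a query w.r.t. D with Q ⊆ K. Then for every diagnosis D' ∈ D: D' ∈ dx(Q) if and only if K \ D' ⊇ Q, and D' ∈ dnx(Q) if and only if K \ D' ⊉ Q. -/

import Mathlib

/-!
If `Q ⊆ K \ D` then `Q ⊆ K*_D`, so `K*_D` entails `Q` and `K*_D ∪ Q = K*_D` is faultless.
Otherwise `Q` meets the minimal diagnosis `D`, and `K*_D ∪ (D ∩ Q)` is `K*` of the smaller
set `D \ Q`, hence faulty. It then cannot be entailed by `K*_D`, since adding entailed sentences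
preserves faultlessness, while `K*_D ∪ Q` contains it and so is faulty as well.
-/

namespace KBDDiag

/-- A diagnosis problem instance (DPI) `⟨K,B,P,N⟩_R` over a Tarskian logic on sentences `L`. -/
structure DPI (L : Type*) where
  /-- the entailment relation of the logic -/
  entails : Set L → L → Prop
  /-- entailment is monotonic -/
  entails_mono : ∀ (X Y : Set L) (α : L), entails X α → entails (X ∪ Y) α
  /-- entailment is idempotent -/
  entails_idem : ∀ (X A : Set L) (β : L),
    (∀ α ∈ A, entails X α) → entails (X ∪ A) β → entails X β
  /-- entailment is extensive -/
  entails_ext : ∀ (X : Set L) (α : L), α ∈ X → entails X α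
  /-- the (possibly faulty) KB -/
  K : Set L
  /-- the background KB -/
  B : Set L
  /-- the positive test cases -/
  P : Set (Set L)
  /-- the negative test cases -/
  N : Set (Set L)
  /-- requirements: `r X` means the KB `X` satisfies requirement `r` -/
  R : Set (Set L → Prop)
  K_finite : K.Finite
  B_finite : B.Finite
  K_B_disjoint : K ∩ B = ∅
  P_finite : P.Finite
  P_mem_finite : ∀ p ∈ P, Set.Finite p
  N_finite : N.Finite
  N_mem_finite : ∀ n ∈ N, Set.Finite n
  /-- violation of a requirement is monotone -/
  viol_mono : ∀ r ∈ R, ∀ X Y : Set L, X ⊆ Y → ¬ r X → ¬ r Y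
  /-- requirements are preserved under adding entailed sentences -/
  sat_entailed : ∀ r ∈ R, ∀ X A : Set L, r X → (∀ α ∈ A, entails X α) → r (X ∪ A)
  /-- the background KB satisfies every requirement -/
  B_sat : ∀ r ∈ R, r B

namespace DPI

variable {L : Type*} (d : DPI L)

/-- `X ⊨ Y` : X entails every sentence of Y. -/
def EntailsAll (X Y : Set L) : Prop := ∀ α ∈ Y, d.entails X α

/-- `U_P`, the union of all positive test cases. -/
def UP : Set L := ⋃₀ d.P

/-- `Ks` is a solution KB w.r.t. the DPI. -/
def IsSolutionKB (Ks : Set L) : Prop :=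
  (∀ r ∈ d.R, r (Ks ∪ d.B)) ∧
  (∀ p ∈ d.P, d.EntailsAll (Ks ∪ d.B) p) ∧
  (∀ n ∈ d.N, ¬ d.EntailsAll (Ks ∪ d.B) n)

/-- `D` is a diagnosis w.r.t. the DPI. -/
def IsDiagnosis (D : Set L) : Prop :=
  D ⊆ d.K ∧ d.IsSolutionKB ((d.K \ D) ∪ d.UP)

/-- `D` is a minimal diagnosis w.r.t. the DPI. -/
def IsMinDiagnosis (D : Set L) : Prop :=
  d.IsDiagnosis D ∧ ∀ D' ⊂ D, ¬ d.IsDiagnosis D'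

/-- `C` is a conflict w.r.t. the DPI. -/
def IsConflict (C : Set L) : Prop :=
  C ⊆ d.K ∧ ¬ d.IsSolutionKB (C ∪ d.UP)

/-- `C` is a minimal conflict w.r.t. the DPI. -/
def IsMinConflict (C : Set L) : Prop :=
  d.IsConflict C ∧ ∀ C' ⊂ C, ¬ d.IsConflict C'

/-- `Ks` is a maximal solution KB w.r.t. the DPI. -/
def IsMaxSolutionKB (Ks : Set L) : Prop :=
  d.IsSolutionKB Ks ∧ ¬ ∃ K' : Set L, d.IsSolutionKB K' ∧ Ks ∩ d.K ⊂ K' ∩ d.K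

/-- `K*_i = (K \ D_i) ∪ B ∪ U_P`. -/
def Kstar (Di : Set L) : Set L := (d.K \ Di) ∪ d.B ∪ d.UP

/-- `X` violates some requirement in `R` or entails some negative test case. -/
def Violates (X : Set L) : Prop :=
  (∃ r ∈ d.R, ¬ r X) ∨ (∃ n ∈ d.N, d.EntailsAll X n)

/-- `dx(X)` w.r.t. the leading diagnoses `Ds`. -/
def dxS (Ds : Set (Set L)) (X : Set L) : Set (Set L) :=
  {Di ∈ Ds | d.EntailsAll (d.Kstar Di) X}

/-- `dnx(X)` w.r.t. the leading diagnoses `Ds`. -/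
def dnxS (Ds : Set (Set L)) (X : Set L) : Set (Set L) :=
  {Di ∈ Ds | d.Violates (d.Kstar Di ∪ X)}

/-- `dz(X)` w.r.t. the leading diagnoses `Ds`. -/
def dzS (Ds : Set (Set L)) (X : Set L) : Set (Set L) :=
  Ds \ (d.dxS Ds X ∪ d.dnxS Ds X)

/-- `Q` is a query w.r.t. the leading diagnoses `Ds`. -/
def IsQuery (Ds : Set (Set L)) (Q : Set L) : Prop :=
  Q.Nonempty ∧ (d.dxS Ds Q).Nonempty ∧ (d.dnxS Ds Q).Nonempty

/-- The canonical query `Q_can(S) = (K \ U_S) ∩ (U_D \ I_D)` w.r.t. the seed `S`. -/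
def Qcan (Ds S : Set (Set L)) : Set L := (d.K \ ⋃₀ S) ∩ (⋃₀ Ds \ ⋂₀ Ds)

/-- `⟨dxp, dnxp, ∅⟩` is a canonical q-partition of `Ds`. -/
def IsCanonicalQPartition (Ds dxp dnxp : Set (Set L)) : Prop :=
  dxp ∪ dnxp = Ds ∧ dxp ∩ dnxp = ∅ ∧
  dxp.Nonempty ∧ dxp ⊂ Ds ∧
  (d.Qcan Ds dxp).Nonempty ∧
  d.dxS Ds (d.Qcan Ds dxp) = dxp ∧
  d.dnxS Ds (d.Qcan Ds dxp) = dnxp ∧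
  d.dzS Ds (d.Qcan Ds dxp) = ∅

end DPI

/-- `Disc_D = U_D \ I_D`, the discrimination sentences w.r.t. `Ds`. -/
def Disc {L : Type*} (Ds : Set (Set L)) : Set L := ⋃₀ Ds \ ⋂₀ Ds

/-- `H` is a hitting set of the collection `S`. -/
def IsHittingSet {α : Type*} (S : Set (Set α)) (H : Set α) : Prop :=
  H ⊆ ⋃₀ S ∧ ∀ s ∈ S, (H ∩ s).Nonempty

/-- `H` is a minimal hitting set of the collection `S`. -/
def IsMinHittingSet {α : Type*} (S : Set (Set α)) (H : Set α) : Prop :=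
  IsHittingSet S H ∧ ∀ H' ⊂ H, ¬ IsHittingSet S H'

/-- `MHS S`, the set of all minimal hitting sets of `S`. -/
def MHS {α : Type*} (S : Set (Set α)) : Set (Set α) :=
  {H | IsMinHittingSet S H}


namespace DPI

variable {L : Type*} (d : DPI L)

theorem kstar_eq (D : Set L) : d.Kstar D = (d.K \ D ∪ d.UP) ∪ d.B := by
  simp only [Kstar, Set.union_right_comm]

theorem entailsAll_of_subset {X A : Set L} (h : A ⊆ X) : d.EntailsAll X A :=
  fun α hα => d.entails_ext X α (h hα)

theorem isSolutionKB_iff {Ks : Set L} (hP : d.UP ⊆ Ks) :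
    d.IsSolutionKB Ks ↔ ¬ d.Violates (Ks ∪ d.B) := by
  have hPos : ∀ p ∈ d.P, d.EntailsAll (Ks ∪ d.B) p := fun p hp =>
    d.entailsAll_of_subset ((Set.subset_sUnion_of_mem hp).trans (hP.trans Set.subset_union_left))
  simp only [IsSolutionKB, Violates, not_or, not_exists, not_and, not_not]
  exact ⟨fun ⟨hR, _, hN⟩ => ⟨hR, hN⟩, fun ⟨hR, hN⟩ => ⟨hR, hPos, hN⟩⟩

theorem isDiagnosis_iff {D : Set L} : d.IsDiagnosis D ↔ D ⊆ d.K ∧ ¬ d.Violates (d.Kstar D) := by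
  rw [IsDiagnosis, d.isSolutionKB_iff Set.subset_union_right, kstar_eq]

variable {d}

theorem kstar_sdiff {D : Set L} (hD : D ⊆ d.K) (A : Set L) :
    d.Kstar (D \ A) = d.Kstar D ∪ (D ∩ A) := by
  ext x
  simp only [Kstar, Set.mem_union, Set.mem_sdiff, Set.mem_inter_iff]
  have := @hD x
  tauto

theorem subset_kstar_of_subset_sdiff {D A : Set L} (h : A ⊆ d.K \ D) : A ⊆ d.Kstar D :=
  h.trans (Set.subset_union_left.trans Set.subset_union_left)

theorem inter_nonempty_of_not_subset_sdiff {D Q : Set L} (hQK : Q ⊆ d.K)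
    (hQD : ¬ Q ⊆ d.K \ D) : (D ∩ Q).Nonempty := by
  rw [Set.inter_comm, ← Set.not_disjoint_iff_nonempty_inter]
  exact fun hdisj => hQD (Set.subset_sdiff.mpr ⟨hQK, hdisj⟩)

theorem Violates.mono {X Y : Set L} (hXY : X ⊆ Y) (hX : d.Violates X) : d.Violates Y := by
  rcases hX with ⟨r, hr, hrX⟩ | ⟨n, hn, hnX⟩
  · exact Or.inl ⟨r, hr, d.viol_mono r hr X Y hXY hrX⟩
  · refine Or.inr ⟨n, hn, fun α hα => ?_⟩
    simpa only [Set.union_eq_self_of_subset_left hXY] using d.entails_mono X Y α (hnX α hα)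

theorem not_violates_union_of_entailsAll {X A : Set L} (hX : ¬ d.Violates X)
    (hA : d.EntailsAll X A) : ¬ d.Violates (X ∪ A) := by
  rintro (⟨r, hr, hrXA⟩ | ⟨n, hn, hnXA⟩)
  · exact hX (Or.inl ⟨r, hr, fun hrX => hrXA (d.sat_entailed r hr X A hrX hA)⟩)
  · exact hX (Or.inr ⟨n, hn, fun β hβ => d.entails_idem X A β hA (hnXA β hβ)⟩)

theorem IsDiagnosis.not_violates_kstar {D : Set L} (hD : d.IsDiagnosis D) :
    ¬ d.Violates (d.Kstar D) :=
  (d.isDiagnosis_iff.mp hD).2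

theorem IsMinDiagnosis.violates_kstar_union_inter {D A : Set L} (hD : d.IsMinDiagnosis D)
    (hDA : (D ∩ A).Nonempty) : d.Violates (d.Kstar D ∪ (D ∩ A)) := by
  have hDK : D ⊆ d.K := hD.1.1
  have hnot := hD.2 (D \ A) (Set.sdiff_ssubset_left_iff.mpr hDA)
  rw [isDiagnosis_iff, kstar_sdiff hDK] at hnot
  by_contra h
  exact hnot ⟨Set.sdiff_subset.trans hDK, h⟩

theorem IsMinDiagnosis.entailsAll_kstar_iff {D Q : Set L} (hD : d.IsMinDiagnosis D)
    (hQK : Q ⊆ d.K) : d.EntailsAll (d.Kstar D) Q ↔ Q ⊆ d.K \ D := by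
  refine ⟨fun hQ => ?_, fun h => d.entailsAll_of_subset (subset_kstar_of_subset_sdiff h)⟩
  by_contra hQD
  exact not_violates_union_of_entailsAll hD.1.not_violates_kstar (fun α hα => hQ α hα.2)
    (hD.violates_kstar_union_inter (inter_nonempty_of_not_subset_sdiff hQK hQD))

theorem IsMinDiagnosis.violates_kstar_union_iff {D Q : Set L} (hD : d.IsMinDiagnosis D)
    (hQK : Q ⊆ d.K) : d.Violates (d.Kstar D ∪ Q) ↔ ¬ Q ⊆ d.K \ D := by
  refine ⟨fun hviol hQD => ?_, fun hQD => ?_⟩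
  · rw [Set.union_eq_self_of_subset_right (subset_kstar_of_subset_sdiff hQD)] at hviol
    exact hD.1.not_violates_kstar hviol
  · exact (hD.violates_kstar_union_inter (inter_nonempty_of_not_subset_sdiff hQK hQD)).mono
      (Set.union_subset_union_right _ Set.inter_subset_right)

end DPI

theorem statement8_general {L : Type*} (d : DPI L) (Ds : Set (Set L))
    (hDs : ∀ Di ∈ Ds, d.IsMinDiagnosis Di)
    (Q : Set L) (hQK : Q ⊆ d.K) :
    ∀ Di ∈ Ds,
      (Di ∈ d.dxS Ds Q ↔ Q ⊆ d.K \ Di) ∧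
      (Di ∈ d.dnxS Ds Q ↔ ¬ Q ⊆ d.K \ Di) := by
  intro Di hDi
  have hmin := hDs Di hDi
  exact ⟨(and_iff_right hDi).trans (hmin.entailsAll_kstar_iff hQK),
    (and_iff_right hDi).trans (hmin.violates_kstar_union_iff hQK)⟩

/-- For a query `Q ⊆ K` w.r.t. `Ds` and any `Di ∈ Ds`:
`Di ∈ dx(Q)` iff `K \ Di ⊇ Q`, and `Di ∈ dnx(Q)` iff `K \ Di ⊉ Q`. -/
theorem statement8 {L : Type*} (d : DPI L) (Ds : Set (Set L))
    (hDs : ∀ Di ∈ Ds, d.IsMinDiagnosis Di)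
    (Q : Set L) (hQK : Q ⊆ d.K) (hQ : d.IsQuery Ds Q) :
    ∀ Di ∈ Ds,
      (Di ∈ d.dxS Ds Q ↔ Q ⊆ d.K \ Di) ∧
      (Di ∈ d.dnxS Ds Q ↔ ¬ Q ⊆ d.K \ Di) :=
  statement8_general d Ds hDs Q hQK

end KBDDiag
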